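/- Let α ∈ (0,1) and let χ_{m−2}(1−α) denote the (1−α)-quantile of the (central) chi-square distribution with m−2 degrees of freedom. Define the asymptotic level α̂(γ,Π) = 1 − F_{m−2}(χ_{m−2}(1−α), λ̂²(γ,Π)), so that α̂(0,Π) = α. Then sup_Π |α̂(γ,Π) − α| → 0 as γ → 0, where the supremum is over all probability distributions Π on ℝ. (Qualitative robustness relation (2.10).) -/

import Mathlib

/-!
Only the noncentrality parameter depends on `Π`, and it is `O(γ²)` uniformly in `Π`: the drift
is a finite sum of differences of values of a c.d.f., hence bounded, and `E_m − ααᵀ` is a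
contraction. By the triangle inequality in `ℝ^{m-2}`, `F_{m-2}(c, λ²)` lies between the central
c.d.f. evaluated at `(√c ∓ λ)²`. The central chi-square law has no atoms (spheres are
Lebesgue-null), so its c.d.f. is continuous: the quantile `c = χ_{m-2}(1-α)` satisfies
`F_{m-2}(c, 0) = 1 - α`, and the two bounds converge to `F_{m-2}(c, 0)` as `λ² → 0`.
-/

open MeasureTheory

/-- Standard normal cumulative distribution function `Φ`. -/
noncomputable def stdNormalCDF (x : ℝ) : ℝ :=
  (ProbabilityTheory.gaussianReal 0 1 (Set.Iic x)).toReal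

/-- Drift `Δ(x, Π) = ∑_{j=0}^p [∫ G(x + β_j s) dΠ(s) − G(x)]` (with `β 0 = -1`). -/
noncomputable def drift (p : ℕ) (β : Fin (p + 1) → ℝ) (G : ℝ → ℝ)
    (Pim : Measure ℝ) (x : ℝ) : ℝ :=
  ∑ j : Fin (p + 1), ((∫ s, G (x + β j * s) ∂Pim) - G x)

/-- Symmetrized drift `Δ_S(x, Π) = (Δ(x,Π) − Δ(−x,Π))/2`. -/
noncomputable def driftS (p : ℕ) (β : Fin (p + 1) → ℝ) (G : ℝ → ℝ)
    (Pim : Measure ℝ) (x : ℝ) : ℝ :=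
  (drift p β G Pim x - drift p β G Pim (-x)) / 2

/-- Cell probabilities under the Gaussian null: `p_j(θ) = 2(Φ(x_j/θ) − Φ(x_{j-1}/θ))`
for `1 ≤ j ≤ m-1`, and `p_m(θ) = 2(1 − Φ(x_{m-1}/θ))` (since `x_m = ∞`). -/
noncomputable def cellProb (m : ℕ) (x : ℕ → ℝ) (j : ℕ) (θ : ℝ) : ℝ :=
  if j < m then 2 * (stdNormalCDF (x j / θ) - stdNormalCDF (x (j - 1) / θ))
  else 2 * (1 - stdNormalCDF (x (m - 1) / θ))

/-- Components of the shift vector: `δ_j(Π) = 2[Δ_S(x_j,Π) − Δ_S(x_{j-1},Π)]` for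
`j < m`, and `δ_m(Π) = −2 Δ_S(x_{m-1},Π)` (as `Δ_S(x_m,Π) = lim_{x→∞} Δ_S(x,Π) = 0`),
computed with `G(x) = Φ(x/θ₀)`. -/
noncomputable def shiftComp (p : ℕ) (β : Fin (p + 1) → ℝ) (θ₀ : ℝ)
    (m : ℕ) (x : ℕ → ℝ) (Pim : Measure ℝ) (j : ℕ) : ℝ :=
  let G : ℝ → ℝ := fun y => stdNormalCDF (y / θ₀)
  if j < m then 2 * (driftS p β G Pim (x j) - driftS p β G Pim (x (j - 1)))
  else -(2 * driftS p β G Pim (x (m - 1)))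

/-- The noncentrality parameter
`λ̂²(γ,Π) = γ² |(E_m − α(θ₀)α(θ₀)ᵀ) P^{−1/2}(θ₀) δ(Π)|²`, written coordinatewise:
`b(θ₀) = P^{-1/2}(θ₀) p'(θ₀)`, `α = b/|b|`, `d = P^{-1/2}(θ₀) δ(Π)`, and the
projection `d - ⟨α, d⟩ α`. -/
noncomputable def lambdaHatSq (p : ℕ) (β : Fin (p + 1) → ℝ) (θ₀ : ℝ)
    (m : ℕ) (x : ℕ → ℝ) (γ : ℝ) (Pim : Measure ℝ) : ℝ :=
  let pj : ℕ → ℝ := fun j => cellProb m x j θ₀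
  let p' : ℕ → ℝ := fun j => deriv (fun θ => cellProb m x j θ) θ₀
  let b : ℕ → ℝ := fun j => p' j / Real.sqrt (pj j)
  let nb : ℝ := Real.sqrt (∑ j ∈ Finset.Icc 1 m, b j ^ 2)
  let a : ℕ → ℝ := fun j => b j / nb
  let d : ℕ → ℝ := fun j => shiftComp p β θ₀ m x Pim j / Real.sqrt (pj j)
  γ ^ 2 * ∑ j ∈ Finset.Icc 1 m,
    (d j - (∑ i ∈ Finset.Icc 1 m, a i * d i) * a j) ^ 2

/-- Noncentral chi-square c.d.f. `F_k(c, λ²)`: the c.d.f. of `‖Z + e‖²` where `Z` is a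
standard Gaussian vector in `ℝ^k` and `e` is any vector with `‖e‖² = λ²`
(here `e = (√λ², 0, …, 0)`). -/
noncomputable def noncentralChiSqCDF (k : ℕ) (c : ℝ) (l : ℝ) : ℝ :=
  ((Measure.pi fun _ : Fin k => ProbabilityTheory.gaussianReal 0 1)
    {v | ∑ i, (v i + (if (i : ℕ) = 0 then Real.sqrt l else 0)) ^ 2 ≤ c}).toReal

/-- `q`-quantile of the central chi-square distribution with `k` degrees of freedom. -/
noncomputable def chiSqQuantile (k : ℕ) (q : ℝ) : ℝ :=
  sInf {c : ℝ | q ≤ noncentralChiSqCDF k c 0}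

open ProbabilityTheory Set Filter Topology

theorem MeasureTheory.Measure.AbsolutelyContinuous.pi_fin {α : Type*} [MeasurableSpace α] :
    ∀ {n : ℕ} {μ ν : Fin n → Measure α} [∀ i, SigmaFinite (μ i)] [∀ i, SigmaFinite (ν i)],
      (∀ i, μ i ≪ ν i) → Measure.pi μ ≪ Measure.pi ν
  | 0, μ, ν, _, _, _ => by
    rw [Measure.pi_of_empty μ, Measure.pi_of_empty ν]
  | n + 1, μ, ν, _, _, h => by
    rw [← (measurePreserving_piFinSuccAbove μ 0).symm.map_eq,
      ← (measurePreserving_piFinSuccAbove ν 0).symm.map_eq]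
    exact ((h 0).prod (Measure.AbsolutelyContinuous.pi_fin fun i => h _)).map
      (MeasurableEquiv.measurable _)

theorem sum_sq_eq_norm_toLp_sq {ι : Type*} [Fintype ι] (v : ι → ℝ) :
    ∑ i, v i ^ 2 = ‖WithLp.toLp 2 v‖ ^ 2 := by
  rw [EuclideanSpace.real_norm_sq_eq]

theorem sum_add_sq_eq_norm_toLp_add_sq {ι : Type*} [Fintype ι] (v w : ι → ℝ) :
    ∑ i, (v i + w i) ^ 2 = ‖WithLp.toLp 2 v + WithLp.toLp 2 w‖ ^ 2 := by
  rw [← WithLp.toLp_add]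
  exact sum_sq_eq_norm_toLp_sq (v + w)

theorem volume_setOf_sum_sq_eq (n : ℕ) (c : ℝ) :
    volume {v : Fin (n + 1) → ℝ | ∑ i, v i ^ 2 = c} = 0 := by
  have hsub : {v : Fin (n + 1) → ℝ | ∑ i, v i ^ 2 = c} ⊆
      WithLp.toLp 2 ⁻¹' Metric.sphere 0 √c := fun v hv => by
    rw [mem_preimage, mem_sphere_zero_iff_norm, ← hv, sum_sq_eq_norm_toLp_sq,
      Real.sqrt_sq (norm_nonneg _)]
  exact measure_mono_null hsub <|
    (PiLp.volume_preserving_toLp (Fin (n + 1))).quasiMeasurePreserving.preimage_null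
      (Measure.addHaar_sphere volume 0 √c)

theorem pi_gaussianReal_setOf_sum_sq_eq (n : ℕ) (c : ℝ) :
    Measure.pi (fun _ : Fin (n + 1) => gaussianReal 0 1) {v | ∑ i, v i ^ 2 = c} = 0 :=
  Measure.AbsolutelyContinuous.pi_fin (fun _ => gaussianReal_absolutelyContinuous 0 one_ne_zero)
    (volume_setOf_sum_sq_eq n c)

theorem ProbabilityTheory.continuous_cdf (ρ : Measure ℝ) [IsProbabilityMeasure ρ]
    [NullSingletonClass ρ] : Continuous (cdf ρ) := by
  refine continuous_iff_continuousAt.2 fun c =>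
    (monotone_cdf ρ).continuousAt_iff_leftLim_eq_rightLim.2 ?_
  have hjump := (cdf ρ).measure_singleton c
  rw [measure_cdf, measure_singleton, eq_comm, ENNReal.ofReal_eq_zero, sub_nonpos] at hjump
  rw [(cdf ρ).rightLim_eq]
  exact le_antisymm ((monotone_cdf ρ).leftLim_le le_rfl) hjump

noncomputable def chiSqMeasure (k : ℕ) : Measure ℝ :=
  (Measure.pi fun _ : Fin k => gaussianReal 0 1).map fun v => ∑ i, v i ^ 2

theorem measurable_sum_sq (k : ℕ) : Measurable fun v : Fin k → ℝ => ∑ i, v i ^ 2 := by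
  fun_prop

instance (k : ℕ) : IsProbabilityMeasure (chiSqMeasure k) :=
  Measure.isProbabilityMeasure_map (measurable_sum_sq k).aemeasurable

instance (k : ℕ) : NullSingletonClass (chiSqMeasure (k + 1)) where
  measure_singleton c := by
    rw [chiSqMeasure, Measure.map_apply (measurable_sum_sq _) (measurableSet_singleton c)]
    exact pi_gaussianReal_setOf_sum_sq_eq k c

theorem cdf_chiSqMeasure_zero (k : ℕ) : cdf (chiSqMeasure (k + 1)) 0 = 0 := by
  have hnull : Measure.pi (fun _ : Fin (k + 1) => gaussianReal 0 1)
      ((fun v => ∑ i, v i ^ 2) ⁻¹' Iic 0) = 0 :=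
    measure_mono_null (fun v hv => le_antisymm hv (by positivity))
      (pi_gaussianReal_setOf_sum_sq_eq k 0)
  rw [cdf_eq_real, measureReal_def, chiSqMeasure,
    Measure.map_apply (measurable_sum_sq _) measurableSet_Iic, hnull, ENNReal.toReal_zero]

theorem noncentralChiSqCDF_zero (k : ℕ) (c : ℝ) :
    noncentralChiSqCDF k c 0 = cdf (chiSqMeasure k) c := by
  rw [cdf_eq_real, measureReal_def, chiSqMeasure,
    Measure.map_apply (measurable_sum_sq _) measurableSet_Iic]
  simp only [noncentralChiSqCDF, Real.sqrt_zero, ite_self, add_zero]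
  rfl

theorem apply_sInf_setOf_le_eq {G : ℝ → ℝ} (hG : Continuous G) (hmono : Monotone G)
    {t : ℝ} (ht0 : G 0 < t) (ht : ∃ c, t ≤ G c) :
    G (sInf {c | t ≤ G c}) = t := by
  set S := {c | t ≤ G c}
  have hbdd : BddBelow S := ⟨0, fun c hc => (hmono.reflect_lt (ht0.trans_le hc)).le⟩
  have hmem : sInf S ∈ S := (isClosed_le continuous_const hG).csInf_mem ht hbdd
  refine le_antisymm (le_of_tendsto (hG.continuousWithinAt (s := Iio (sInf S))) ?_) hmem
  filter_upwards [self_mem_nhdsWithin] with c hc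
  exact (not_le.1 fun h => (csInf_le hbdd h).not_gt hc).le

theorem noncentralChiSqCDF_chiSqQuantile {k : ℕ} {t : ℝ} (ht : t ∈ Ioo 0 1) :
    noncentralChiSqCDF (k + 1) (chiSqQuantile (k + 1) t) 0 = t := by
  simp only [chiSqQuantile, noncentralChiSqCDF_zero]
  refine apply_sInf_setOf_le_eq (continuous_cdf _) (monotone_cdf _) ?_
    ((tendsto_cdf_atTop _).eventually (eventually_ge_nhds ht.2)).exists
  rw [cdf_chiSqMeasure_zero]
  exact ht.1

theorem chiSqQuantile_pos {k : ℕ} {t : ℝ} (ht : t ∈ Ioo 0 1) : 0 < chiSqQuantile (k + 1) t := by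
  refine (monotone_cdf (chiSqMeasure (k + 1))).reflect_lt ?_
  rw [cdf_chiSqMeasure_zero, ← noncentralChiSqCDF_zero, noncentralChiSqCDF_chiSqQuantile ht]
  exact ht.1

theorem noncentralChiSqCDF_mem_Icc {k : ℕ} {c l : ℝ} (hl : 0 ≤ l) (hlc : l ≤ c) :
    noncentralChiSqCDF (k + 1) c l ∈ Icc (noncentralChiSqCDF (k + 1) ((√c - √l) ^ 2) 0)
      (noncentralChiSqCDF (k + 1) ((√c + √l) ^ 2) 0) := by
  set e : Fin (k + 1) → ℝ := fun i => if (i : ℕ) = 0 then √l else 0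
  have he : ‖WithLp.toLp 2 e‖ = √l := by
    rw [← Real.sqrt_sq (norm_nonneg _), ← sum_sq_eq_norm_toLp_sq, Fin.sum_univ_succ]
    simp [e, Real.sq_sqrt hl]
  have hsqc : √c ^ 2 = c := Real.sq_sqrt (hl.trans hlc)
  have hlc' : √l ≤ √c := Real.sqrt_le_sqrt hlc
  simp only [noncentralChiSqCDF, Real.sqrt_zero, ite_self, add_zero]
  constructor <;> refine ENNReal.toReal_mono (measure_ne_top _ _) (measure_mono fun v hv => ?_) <;>
    simp only [mem_ofPred_eq, sum_sq_eq_norm_toLp_sq v] at hv ⊢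
  · rw [sum_add_sq_eq_norm_toLp_add_sq v e, ← hsqc, sq_le_sq₀ (norm_nonneg _) (Real.sqrt_nonneg _)]
    rw [sq_le_sq₀ (norm_nonneg _) (sub_nonneg.2 hlc')] at hv
    linarith [norm_add_le (WithLp.toLp 2 v) (WithLp.toLp 2 e)]
  · rw [sum_add_sq_eq_norm_toLp_add_sq v e, ← hsqc,
      sq_le_sq₀ (norm_nonneg _) (Real.sqrt_nonneg _)] at hv
    rw [sq_le_sq₀ (norm_nonneg _) (by positivity)]
    have htri := norm_sub_le (WithLp.toLp 2 v + WithLp.toLp 2 e) (WithLp.toLp 2 e)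
    rw [add_sub_cancel_right] at htri
    linarith

theorem monotone_noncentralChiSqCDF_zero (k : ℕ) :
    Monotone fun c => noncentralChiSqCDF k c 0 := by
  simpa only [noncentralChiSqCDF_zero] using monotone_cdf (chiSqMeasure k)

theorem continuous_noncentralChiSqCDF_zero (k : ℕ) :
    Continuous fun c => noncentralChiSqCDF (k + 1) c 0 := by
  simpa only [noncentralChiSqCDF_zero] using continuous_cdf (chiSqMeasure (k + 1))

theorem abs_noncentralChiSqCDF_sub_le {k : ℕ} {c l L : ℝ} (hl : 0 ≤ l) (hlL : l ≤ L)
    (hLc : L ≤ c) :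
    |noncentralChiSqCDF (k + 1) c l - noncentralChiSqCDF (k + 1) c 0| ≤
      noncentralChiSqCDF (k + 1) ((√c + √L) ^ 2) 0 -
        noncentralChiSqCDF (k + 1) ((√c - √L) ^ 2) 0 := by
  have hG := monotone_noncentralChiSqCDF_zero (k + 1)
  obtain ⟨hlo, hhi⟩ := noncentralChiSqCDF_mem_Icc (k := k) hl (hlL.trans hLc)
  have hsl : √l ≤ √L := Real.sqrt_le_sqrt hlL
  have hLc' : 0 ≤ √c - √L := sub_nonneg.2 (Real.sqrt_le_sqrt hLc)
  have hsqc : √c ^ 2 = c := Real.sq_sqrt (hl.trans (hlL.trans hLc))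
  have h1 := hG (pow_le_pow_left₀ hLc' (show √c - √L ≤ √c - √l by linarith) 2)
  have h2 := hG (pow_le_pow_left₀ (by positivity) (show √c + √l ≤ √c + √L by linarith) 2)
  have h3 := hG (hsqc ▸ pow_le_pow_left₀ hLc' (sub_le_self _ (Real.sqrt_nonneg L)) 2)
  have h4 := hG (hsqc ▸ pow_le_pow_left₀ (Real.sqrt_nonneg c)
    (le_add_of_nonneg_right (Real.sqrt_nonneg L)) 2)
  simp only at h1 h2 h3 h4
  rw [abs_le]
  constructor <;> linarith

theorem tendsto_noncentralChiSqCDF_spread (k : ℕ) (c : ℝ) :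
    Tendsto (fun L => noncentralChiSqCDF (k + 1) ((√c + √L) ^ 2) 0 -
      noncentralChiSqCDF (k + 1) ((√c - √L) ^ 2) 0) (𝓝 0) (𝓝 0) := by
  have hG := continuous_noncentralChiSqCDF_zero k
  exact Continuous.tendsto' ((hG.comp (by fun_prop)).sub (hG.comp (by fun_prop))) 0 0 (by simp)

theorem abs_stdNormalCDF_le_one (y : ℝ) : |stdNormalCDF y| ≤ 1 := by
  rw [stdNormalCDF, ← measureReal_def, abs_of_nonneg measureReal_nonneg]
  exact measureReal_le_one

section Drift

variable {p : ℕ} (β : Fin (p + 1) → ℝ) (Pim : Measure ℝ) [IsProbabilityMeasure Pim]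

theorem abs_drift_le {G : ℝ → ℝ} {M : ℝ} (hG : ∀ y, |G y| ≤ M) (y : ℝ) :
    |drift p β G Pim y| ≤ (p + 1) * (2 * M) := by
  have hint : ∀ j, |∫ s, G (y + β j * s) ∂Pim| ≤ M := fun j => by
    simpa using norm_integral_le_of_norm_le_const (μ := Pim) (f := fun s => G (y + β j * s))
      (Eventually.of_forall fun s => by simpa using hG (y + β j * s))
  calc |drift p β G Pim y|
      ≤ ∑ j : Fin (p + 1), |(∫ s, G (y + β j * s) ∂Pim) - G y| := Finset.abs_sum_le_sum_abs _ _
    _ ≤ ∑ _j : Fin (p + 1), 2 * M :=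
        Finset.sum_le_sum fun j _ => (abs_sub _ _).trans (by linarith [hint j, hG y])
    _ = (p + 1) * (2 * M) := by simp

theorem abs_driftS_le {G : ℝ → ℝ} {M : ℝ} (hG : ∀ y, |G y| ≤ M) (y : ℝ) :
    |driftS p β G Pim y| ≤ (p + 1) * (2 * M) := by
  rw [driftS, abs_div, abs_two, div_le_iff₀ two_pos]
  linarith [abs_sub (drift p β G Pim y) (drift p β G Pim (-y)),
    abs_drift_le β Pim hG y, abs_drift_le β Pim hG (-y)]

theorem abs_shiftComp_le (θ₀ : ℝ) (m : ℕ) (x : ℕ → ℝ) (j : ℕ) :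
    |shiftComp p β θ₀ m x Pim j| ≤ 8 * (p + 1) := by
  have hΦ := abs_driftS_le β Pim fun y => abs_stdNormalCDF_le_one (y / θ₀)
  unfold shiftComp
  split_ifs
  · rw [abs_mul, abs_two]
    linarith [abs_sub (driftS p β (fun y => stdNormalCDF (y / θ₀)) Pim (x j))
      (driftS p β (fun y => stdNormalCDF (y / θ₀)) Pim (x (j - 1))), hΦ (x j), hΦ (x (j - 1))]
  · rw [abs_neg, abs_mul, abs_two]
    linarith [hΦ (x (m - 1))]

end Drift

theorem sum_sq_sub_sum_mul_mul_le {ι : Type*} (s : Finset ι) (a d : ι → ℝ)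
    (ha : ∑ i ∈ s, a i ^ 2 ≤ 1) :
    ∑ j ∈ s, (d j - (∑ i ∈ s, a i * d i) * a j) ^ 2 ≤ ∑ j ∈ s, d j ^ 2 := by
  have hexpand : ∀ t : ℝ, ∑ j ∈ s, (d j - t * a j) ^ 2 =
      ∑ j ∈ s, d j ^ 2 - 2 * t * ∑ j ∈ s, a j * d j + t ^ 2 * ∑ j ∈ s, a j ^ 2 := fun t => by
    rw [Finset.mul_sum, Finset.mul_sum, ← Finset.sum_sub_distrib, ← Finset.sum_add_distrib]
    exact Finset.sum_congr rfl fun j _ => by ring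
  rw [hexpand]
  nlinarith [mul_le_mul_of_nonneg_left ha (sq_nonneg (∑ i ∈ s, a i * d i))]

theorem sum_div_sqrt_sum_sq_sq_le_one {ι : Type*} (s : Finset ι) (b : ι → ℝ) :
    ∑ j ∈ s, (b j / √(∑ i ∈ s, b i ^ 2)) ^ 2 ≤ 1 := by
  simp_rw [div_pow, ← Finset.sum_div, Real.sq_sqrt (Finset.sum_nonneg fun i _ => sq_nonneg (b i))]
  exact div_self_le_one _

section NoncentralityBound

variable (p : ℕ) (β : Fin (p + 1) → ℝ) (θ₀ : ℝ) (m : ℕ) (x : ℕ → ℝ) (Pim : Measure ℝ)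

theorem lambdaHatSq_nonneg (γ : ℝ) : 0 ≤ lambdaHatSq p β θ₀ m x γ Pim := by
  unfold lambdaHatSq
  positivity

theorem lambdaHatSq_zero : lambdaHatSq p β θ₀ m x 0 Pim = 0 := by
  simp [lambdaHatSq]

theorem lambdaHatSq_le [IsProbabilityMeasure Pim] (γ : ℝ) :
    lambdaHatSq p β θ₀ m x γ Pim ≤
      γ ^ 2 * ∑ j ∈ Finset.Icc 1 m, (8 * (p + 1) / √(cellProb m x j θ₀)) ^ 2 := by
  refine mul_le_mul_of_nonneg_left ((sum_sq_sub_sum_mul_mul_le _ _ _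
    (sum_div_sqrt_sum_sq_sq_le_one _ _)).trans (Finset.sum_le_sum fun j _ => ?_)) (sq_nonneg γ)
  rw [div_pow, div_pow]
  have hδ := abs_le.1 (abs_shiftComp_le β Pim θ₀ m x j)
  exact div_le_div_of_nonneg_right (sq_le_sq' hδ.1 hδ.2) (sq_nonneg _)

end NoncentralityBound

theorem asymptotic_level_qualitative_robustness_general
    (p : ℕ) (β : Fin (p + 1) → ℝ)
    (θ₀ : ℝ)
    (m : ℕ) (hm : 2 < m)
    (x : ℕ → ℝ)
    (α : ℝ) (hα : α ∈ Set.Ioo (0 : ℝ) 1) :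
    (∀ (Pim : Measure ℝ), IsProbabilityMeasure Pim →
      1 - noncentralChiSqCDF (m - 2) (chiSqQuantile (m - 2) (1 - α))
          (lambdaHatSq p β θ₀ m x 0 Pim) = α) ∧
    Filter.Tendsto
      (fun γ : ℝ => ⨆ Pim : {μ : Measure ℝ // IsProbabilityMeasure μ},
        |(1 - noncentralChiSqCDF (m - 2) (chiSqQuantile (m - 2) (1 - α))
            (lambdaHatSq p β θ₀ m x γ (Pim : Measure ℝ))) - α|)
      (nhdsWithin 0 (Set.Ici 0)) (nhds 0) := by
  obtain ⟨k, hk⟩ : ∃ k, m - 2 = k + 1 := ⟨m - 3, by omega⟩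
  have hlevel : 1 - α ∈ Ioo (0 : ℝ) 1 := ⟨by linarith [hα.2], by linarith [hα.1]⟩
  set q := chiSqQuantile (k + 1) (1 - α)
  have hq : noncentralChiSqCDF (k + 1) q 0 = 1 - α := noncentralChiSqCDF_chiSqQuantile hlevel
  rw [hk]
  refine ⟨fun Pim _ => by rw [lambdaHatSq_zero, hq]; ring, ?_⟩
  set C := ∑ j ∈ Finset.Icc 1 m, (8 * (p + 1) / √(cellProb m x j θ₀)) ^ 2
  have hC : Tendsto (fun γ : ℝ => γ ^ 2 * C) (𝓝 0) (𝓝 0) :=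
    ((continuous_pow 2).mul continuous_const).tendsto' 0 0 (by simp)
  have : Nonempty {μ : Measure ℝ // IsProbabilityMeasure μ} := ⟨⟨Measure.dirac 0, inferInstance⟩⟩
  refine tendsto_of_tendsto_of_tendsto_of_le_of_le' tendsto_const_nhds
    ((tendsto_noncentralChiSqCDF_spread k q).comp hC) (.of_forall fun γ =>
      Real.iSup_nonneg fun _ => abs_nonneg _) ?_ |>.mono_left nhdsWithin_le_nhds
  filter_upwards [hC.eventually (ge_mem_nhds (chiSqQuantile_pos (k := k) hlevel))] with γ hγ
  refine ciSup_le fun ⟨Pim, _⟩ => ?_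
  rw [show ∀ F, 1 - F - α = noncentralChiSqCDF (k + 1) q 0 - F by intro F; rw [hq]; ring,
    abs_sub_comm]
  exact abs_noncentralChiSqCDF_sub_le (lambdaHatSq_nonneg ..) (lambdaHatSq_le ..) hγ

/-- qualitative robustness, relation (2.10). With
`α̂(γ,Π) = 1 − F_{m−2}(χ_{m−2}(1−α), λ̂²(γ,Π))` one has `α̂(0,Π) = α`, and
`sup_Π |α̂(γ,Π) − α| → 0` as `γ → 0⁺`, the supremum running over all probability
distributions `Π` on `ℝ`. -/
theorem asymptotic_level_qualitative_robustness
    (p : ℕ) (β : Fin (p + 1) → ℝ) (hβ0 : β 0 = -1)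
    (θ₀ : ℝ) (hθ₀ : 0 < θ₀)
    (m : ℕ) (hm : 2 < m)
    (x : ℕ → ℝ) (hx0 : x 0 = 0) (hxmono : ∀ i, i + 1 < m → x i < x (i + 1))
    (α : ℝ) (hα : α ∈ Set.Ioo (0 : ℝ) 1) :
    (∀ (Pim : Measure ℝ), IsProbabilityMeasure Pim →
      1 - noncentralChiSqCDF (m - 2) (chiSqQuantile (m - 2) (1 - α))
          (lambdaHatSq p β θ₀ m x 0 Pim) = α) ∧
    Filter.Tendsto
      (fun γ : ℝ => ⨆ Pim : {μ : Measure ℝ // IsProbabilityMeasure μ},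
        |(1 - noncentralChiSqCDF (m - 2) (chiSqQuantile (m - 2) (1 - α))
            (lambdaHatSq p β θ₀ m x γ (Pim : Measure ℝ))) - α|)
      (nhdsWithin 0 (Set.Ici 0)) (nhds 0) :=
  asymptotic_level_qualitative_robustness_general p β θ₀ m hm x α hα
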